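/- For 1 ≤ k ≤ n-1, the trace of b^k Λ^k equals n/(1-α)^k, where b = e_{12} + ⋯ + e_{n-1,n} and Λ = Σ_{k=1}^{n-1} ((1-α^k)/(1-α)) e_{k+1,k}. Equivalently, the sum of the entries of Λ^k on the k-th subdiagonal is n/(1-α)^k. -/

import Mathlib

open Matrix Finset

noncomputable section

/-- α = e^{2πi/n}, a primitive n-th root of unity. -/
noncomputable def rootα (n : ℕ) : ℂ := Complex.exp (2 * Real.pi * Complex.I / n)

/-- σ_k = (1-α^k)/(1-α). -/
noncomputable def sigc (n k : ℕ) : ℂ := (1 - rootα n ^ k) / (1 - rootα n)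

/-- Λ = Σ_{k=1}^{n-1} σ_k e_{k+1,k} (1-based), i.e. entry (j+1, j) is σ_{j+1} in 0-based indices. -/
noncomputable def Lam (n : ℕ) : Matrix (Fin n) (Fin n) ℂ :=
  Matrix.of (fun i j => if (i : ℕ) = (j : ℕ) + 1 then sigc n ((j : ℕ) + 1) else 0)

/-- b = e_{12} + e_{23} + ⋯ + e_{n-1,n}, the upper shift matrix. -/
def bMat (n : ℕ) : Matrix (Fin n) (Fin n) ℂ :=
  Matrix.of (fun i j => if (j : ℕ) = (i : ℕ) + 1 then 1 else 0)

/-- a = diag(1, α, α², …, α^{n-1}). -/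
noncomputable def aMat (n : ℕ) : Matrix (Fin n) (Fin n) ℂ :=
  Matrix.diagonal (fun i => rootα n ^ (i : ℕ))

/-- e_{n1}, the matrix with 1 in the bottom-left corner. -/
def enone (n : ℕ) : Matrix (Fin n) (Fin n) ℂ :=
  Matrix.of (fun i j => if (i : ℕ) = n - 1 ∧ (j : ℕ) = 0 then 1 else 0)

/-- c_k = 1/(σ_1 ⋯ σ_k), with c_0 = 1. -/
noncomputable def cCoef (n k : ℕ) : ℂ := (∏ m ∈ Finset.Icc 1 k, sigc n m)⁻¹

/-- φ_n(λ) = Σ_{i=0}^{n-1} c_i Λ^i λ^i. -/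
noncomputable def phiMat (n : ℕ) (t : ℂ) : Matrix (Fin n) (Fin n) ℂ :=
  ∑ i ∈ Finset.range n, (cCoef n i * t ^ i) • Lam n ^ i

lemma rootα_prim (n : ℕ) (hn : 2 ≤ n) : IsPrimitiveRoot (rootα n) n :=
  Complex.isPrimitiveRoot_exp n (by omega)

lemma geom_aux (n c : ℕ) (hn : 2 ≤ n) (hc : c ≤ n - 1) :
    ∑ i ∈ Finset.range n, (rootα n ^ c) ^ i = if c = 0 then (n : ℂ) else 0 := by
  have hprim := rootα_prim n hn
  by_cases h : c = 0
  · simp [h]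
  · rw [if_neg h, geom_sum_eq (hprim.pow_ne_one_of_pos_of_lt (by omega) (by omega))]
    rw [← pow_mul, mul_comm, pow_mul, hprim.pow_eq_one, one_pow, sub_self, zero_div]

lemma prod_neg_aux (n i : ℕ) (t : Finset ℕ) :
    ∏ m ∈ t, -(rootα n ^ (i + m)) =
      (∏ m ∈ t, -(rootα n ^ m)) * (rootα n ^ t.card) ^ i := by
  calc ∏ m ∈ t, -(rootα n ^ (i + m)) = ∏ m ∈ t, (-(rootα n ^ m) * rootα n ^ i) := by
        refine Finset.prod_congr rfl fun m _ => ?_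
        rw [pow_add]; ring
    _ = (∏ m ∈ t, -(rootα n ^ m)) * ∏ m ∈ t, rootα n ^ i := Finset.prod_mul_distrib
    _ = (∏ m ∈ t, -(rootα n ^ m)) * (rootα n ^ i) ^ t.card := by rw [Finset.prod_const]
    _ = (∏ m ∈ t, -(rootα n ^ m)) * (rootα n ^ t.card) ^ i := by
        rw [← pow_mul, mul_comm i, pow_mul]

lemma key_sum (n k : ℕ) (hn : 2 ≤ n) (hk2 : k ≤ n - 1) :
    ∑ i ∈ Finset.range n, ∏ m ∈ Finset.Icc (i + 1) (i + k), (1 - rootα n ^ m) = (n : ℂ) := by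
  have step1 : ∀ i, ∏ m ∈ Finset.Icc (i + 1) (i + k), (1 - rootα n ^ m) =
      ∑ t ∈ (Finset.Icc 1 k).powerset, (∏ m ∈ t, -(rootα n ^ m)) * (rootα n ^ t.card) ^ i := by
    intro i
    rw [← Finset.map_add_left_Icc, Finset.prod_map]
    have : ∀ m ∈ Finset.Icc 1 k,
        (1 - rootα n ^ ((addLeftEmbedding i) m)) = -(rootα n ^ (i + m)) + 1 := by
      intro m _; simp [addLeftEmbedding]; ring
    rw [Finset.prod_congr rfl this, Finset.prod_add]
    refine Finset.sum_congr rfl fun t _ => ?_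
    rw [Finset.prod_const_one, mul_one, prod_neg_aux]
  rw [Finset.sum_congr rfl (fun i _ => step1 i), Finset.sum_comm]
  have step2 : ∀ t ∈ (Finset.Icc 1 k).powerset,
      (∑ i ∈ Finset.range n, (∏ m ∈ t, -(rootα n ^ m)) * (rootα n ^ t.card) ^ i) =
      if t = ∅ then (n : ℂ) else 0 := by
    intro t ht
    rw [← Finset.mul_sum, geom_aux n t.card hn]
    · by_cases h : t = ∅
      · simp [h]
      · rw [if_neg (by simpa using h), mul_zero, if_neg h]
    · have := Finset.card_le_card (Finset.mem_powerset.mp ht)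
      simp only [Nat.card_Icc] at this
      omega
  rw [Finset.sum_congr rfl step2, Finset.sum_ite_eq' (Finset.Icc 1 k).powerset ∅ (fun _ => (n:ℂ))]
  simp

lemma Lam_pow_apply (n k : ℕ) (i j : Fin n) :
    (Lam n ^ k) i j = if (i : ℕ) = (j : ℕ) + k then
      ∏ m ∈ Finset.Icc ((j : ℕ) + 1) ((j : ℕ) + k), sigc n m else 0 := by
  induction k generalizing i j with
  | zero =>
    simp only [pow_zero, Matrix.one_apply, Nat.add_zero]
    by_cases h : i = j
    · simp [h]
    · rw [if_neg h, if_neg (fun hc => h (Fin.ext hc))]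
  | succ k ih =>
    rw [pow_succ, Matrix.mul_apply]
    by_cases h : (j : ℕ) + 1 < n
    · rw [Finset.sum_eq_single (⟨(j : ℕ) + 1, h⟩ : Fin n)]
      · rw [ih]
        simp only [Lam, Matrix.of_apply]
        rw [if_pos trivial]
        by_cases hi : (i : ℕ) = (j : ℕ) + (k + 1)
        · rw [if_pos (by omega), if_pos hi]
          have h1 : Finset.Icc ((j:ℕ)+1) ((j:ℕ)+(k+1)) = Finset.Ico ((j:ℕ)+1) ((j:ℕ)+k+2) := by
            rw [show (j:ℕ)+k+2 = (j:ℕ)+k+1+1 from rfl, Finset.Ico_add_one_right_eq_Icc]; congr 1 <;> omega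
          have h2 : Finset.Icc ((j:ℕ)+1+1) ((j:ℕ)+1+k) = Finset.Ico ((j:ℕ)+2) ((j:ℕ)+k+2) := by
            rw [show (j:ℕ)+k+2 = (j:ℕ)+k+1+1 from rfl, Finset.Ico_add_one_right_eq_Icc]; congr 1 <;> omega
          rw [h1, h2]
          conv_rhs => rw [Finset.prod_eq_prod_Ico_succ_bot
            (show (j:ℕ)+1 < (j:ℕ)+k+2 by omega) (fun m => sigc n m)]
          ring
        · rw [if_neg (by omega), if_neg hi, zero_mul]
      · intro b _ hb
        simp only [Lam, Matrix.of_apply]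
        rw [if_neg, mul_zero]
        intro hc
        exact hb (Fin.ext hc)
      · simp
    · have : ∀ b : Fin n, (Lam n ^ k) i b * Lam n b j = 0 := by
        intro b
        simp only [Lam, Matrix.of_apply]
        rw [if_neg (by omega), mul_zero]
      rw [Finset.sum_congr rfl (fun b _ => this b), Finset.sum_const, smul_zero,
        if_neg (by omega)]

lemma bMat_pow_apply (n k : ℕ) (i j : Fin n) :
    (bMat n ^ k) i j = if (j : ℕ) = (i : ℕ) + k then 1 else 0 := by
  induction k generalizing i j with
  | zero =>
    simp only [pow_zero, Matrix.one_apply, Nat.add_zero]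
    by_cases h : i = j
    · simp [h]
    · rw [if_neg h, if_neg (fun hc => h (Fin.ext hc.symm))]
  | succ k ih =>
    rw [pow_succ, Matrix.mul_apply]
    by_cases h : (i : ℕ) + k < n
    · rw [Finset.sum_eq_single (⟨(i : ℕ) + k, h⟩ : Fin n)]
      · rw [ih, if_pos rfl, one_mul]
        simp only [bMat, Matrix.of_apply]
        by_cases hj : (j : ℕ) = (i : ℕ) + (k + 1)
        · rw [if_pos (by omega), if_pos hj]
        · rw [if_neg (by omega), if_neg hj]
      · intro b _ hb
        rw [ih, if_neg, zero_mul]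
        intro hc
        exact hb (Fin.ext hc)
      · simp
    · have : ∀ b : Fin n, (bMat n ^ k) i b * bMat n b j = 0 := by
        intro b
        rw [ih, if_neg (by omega), zero_mul]
      rw [Finset.sum_congr rfl (fun b _ => this b), Finset.sum_const, smul_zero,
        if_neg (by omega)]

theorem stmt5 (n : ℕ) (hn : 2 ≤ n) (k : ℕ) (hk1 : 1 ≤ k) (hk2 : k ≤ n - 1) :
    Matrix.trace (bMat n ^ k * Lam n ^ k) = (n : ℂ) / (1 - rootα n) ^ k := by
  have hprim := rootα_prim n hn
  have diag : ∀ i : Fin n, (bMat n ^ k * Lam n ^ k) i i =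
      if (i : ℕ) + k < n then ∏ m ∈ Finset.Icc ((i : ℕ) + 1) ((i : ℕ) + k), sigc n m
      else 0 := by
    intro i
    rw [Matrix.mul_apply]
    by_cases h : (i : ℕ) + k < n
    · rw [Finset.sum_eq_single (⟨(i : ℕ) + k, h⟩ : Fin n)]
      · rw [bMat_pow_apply, Lam_pow_apply, if_pos rfl, if_pos rfl, one_mul, if_pos h]
      · intro b _ hb
        rw [bMat_pow_apply, if_neg (fun hc => hb (Fin.ext hc)), zero_mul]
      · simp
    · have hz : ∀ b : Fin n, (bMat n ^ k) i b * (Lam n ^ k) b i = 0 := by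
        intro b
        rw [bMat_pow_apply, if_neg (by omega), zero_mul]
      rw [Finset.sum_congr rfl (fun b _ => hz b), Finset.sum_const, smul_zero, if_neg h]
  rw [Matrix.trace]
  simp only [Matrix.diag_apply]
  rw [Finset.sum_congr rfl (fun i _ => diag i)]
  rw [Fin.sum_univ_eq_sum_range (fun i => if i + k < n then
    ∏ m ∈ Finset.Icc (i + 1) (i + k), sigc n m else 0) n]
  have entry : ∀ i ∈ Finset.range n,
      (if i + k < n then ∏ m ∈ Finset.Icc (i + 1) (i + k), sigc n m else 0) =
      (∏ m ∈ Finset.Icc (i + 1) (i + k), (1 - rootα n ^ m)) / (1 - rootα n) ^ k := by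
    intro i hi
    rw [Finset.mem_range] at hi
    have hprod : ∏ m ∈ Finset.Icc (i + 1) (i + k), sigc n m =
        (∏ m ∈ Finset.Icc (i + 1) (i + k), (1 - rootα n ^ m)) / (1 - rootα n) ^ k := by
      simp only [sigc]
      rw [Finset.prod_div_distrib, Finset.prod_const, Nat.card_Icc]
      congr 2
      omega
    by_cases h : i + k < n
    · rw [if_pos h, hprod]
    · rw [if_neg h]
      have hzero : ∏ m ∈ Finset.Icc (i + 1) (i + k), (1 - rootα n ^ m) = 0 := by
        refine Finset.prod_eq_zero (Finset.mem_Icc.mpr ⟨by omega, by omega⟩ :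
          n ∈ Finset.Icc (i + 1) (i + k)) ?_
        rw [hprim.pow_eq_one, sub_self]
      rw [hzero, zero_div]
  rw [Finset.sum_congr rfl entry, ← Finset.sum_div, key_sum n k hn hk2]

end
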